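/- arXiv:2109.09377 — 3 statements merged into one kernel-verified Lean document; each statement's English description precedes it below -/
import Mathlib

section
/- Let V be a real inner product space, and let u, v ∈ V be unit vectors with ⟨u, v⟩ ∉ {−1, 1}. Let P : V → V be an orthogonal linear map with Pu = v, let π₀ be the orthogonal projection onto the orthogonal complement of u, and π₁ the orthogonal projection onto the orthogonal complement of v. Define D = P ∘ π₀ − π₁ on the plane W = span{u, v}, assuming W is P-invariant and letting δ = det(P|_W) ∈ {−1, 1}. Then the kernel of D restricted to W is the one-dimensional subspace spanned by u − δv. -/
/-!
Since `|⟪u, v⟫| < 1`, the vectors `u, v` form a basis of `W`. Writing `P v = a • u + b • v`, the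
matrix of `P|_W` in this basis is `!![0, a; 1, b]`, so `δ = -a`; preserving `⟪u, v⟫` and `‖v‖`
forces `b = (1 - a) ⟪u, v⟫` and `a ^ 2 = 1`. A direct computation then gives
`D (α • u + β • v) = (β a - α) • (u - ⟪u, v⟫ • v)`, which vanishes exactly when `β = -δ α`,
i.e. when `α • u + β • v = α • (u - δ • v)`.
-/

open scoped RealInnerProductSpace

namespace LinearMap

variable {R M : Type*} [CommRing R] [AddCommGroup M] [Module R M]

theorem det_restrict_span_pair {u v : M} (huv : LinearIndependent R ![u, v]) (f : M →ₗ[R] M)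
    (hf : ∀ x ∈ Submodule.span R {u, v}, f x ∈ Submodule.span R {u, v}) {a b c d : R}
    (hfu : f u = a • u + b • v) (hfv : f v = c • u + d • v) :
    (f.restrict hf).det = a * d - b * c := by
  let B := (Module.Basis.span huv).map
    (LinearEquiv.ofEq _ _ (congrArg _ (Matrix.range_cons_cons_empty u v ![])))
  have hB : ∀ i, (B i : M) = ![u, v] i := fun i => by simp [B]
  have hmatrix : f.restrict hf = Matrix.toLin B B !![a, c; b, d] := B.ext fun i => by
    rw [Matrix.toLin_self]
    fin_cases i <;> ext <;> simp [Fin.sum_univ_two, hB, hfu, hfv]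
  rw [hmatrix, LinearMap.det_toLin, Matrix.det_fin_two_of, mul_comm c]

end LinearMap

theorem LinearIndependent.smul_add_smul_mem_span_sub_smul_iff {K M : Type*} [Field K]
    [AddCommGroup M] [Module K M] {u v : M} (huv : LinearIndependent K ![u, v]) (d α β : K) :
    α • u + β • v ∈ K ∙ (u - d • v) ↔ β = -(α * d) := by
  rw [Submodule.mem_span_singleton]
  constructor
  · rintro ⟨t, ht⟩
    have hcoeff := LinearIndependent.pair_iff.mp huv (t - α) (-(t * d) - β)
      (by rw [← sub_eq_zero.mpr ht]; module)
    linear_combination (-d) * hcoeff.1 - hcoeff.2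
  · rintro rfl
    exact ⟨α, by module⟩

section UnitPair

variable {V : Type*} [NormedAddCommGroup V] [InnerProductSpace ℝ V] {u v : V}

theorem linearIndependent_pair_of_norm_eq_one (hu : ‖u‖ = 1) (hv : ‖v‖ = 1)
    (huv : ⟪u, v⟫ ≠ 1) (huv' : ⟪u, v⟫ ≠ -1) : LinearIndependent ℝ ![u, v] := by
  refine linearIndependent_fin2.mpr ⟨norm_ne_zero_iff.mp (by simp [hv]), fun a ha => ?_⟩
  have ha1 : |a| = 1 := by simpa [norm_smul, hv, hu] using congrArg norm ha
  rcases abs_eq zero_le_one |>.mp ha1 with rfl | rfl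
  · exact huv ((inner_eq_one_iff_of_norm_eq_one hu hv).mpr (by simpa using ha.symm))
  · exact huv' ((inner_eq_neg_one_iff_of_norm_eq_one hu hv).mpr (by simpa using ha.symm))

theorem mul_inner_add_eq_inner_of_map_pair (P : V →ₗ[ℝ] V) (hP : ∀ x y, ⟪P x, P y⟫ = ⟪x, y⟫)
    (hv : ‖v‖ = 1) {a b : ℝ} (hPu : P u = v) (hPv : P v = a • u + b • v) :
    a * ⟪u, v⟫ + b = ⟪u, v⟫ := by
  have := hP u v
  rw [hPu, hPv, inner_add_right, real_inner_smul_right, real_inner_smul_right,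
    inner_self_eq_one_of_norm_eq_one hv, real_inner_comm] at this
  linarith

theorem sq_eq_one_of_map_pair (P : V →ₗ[ℝ] V) (hP : ∀ x y, ⟪P x, P y⟫ = ⟪x, y⟫)
    (hu : ‖u‖ = 1) (hv : ‖v‖ = 1) (huv : ⟪u, v⟫ ≠ 1) (huv' : ⟪u, v⟫ ≠ -1) {a b : ℝ}
    (hPu : P u = v) (hPv : P v = a • u + b • v) : a ^ 2 = 1 := by
  have hb := mul_inner_add_eq_inner_of_map_pair P hP hv hPu hPv
  have hnorm := hP v v
  simp only [hPv, inner_add_left, inner_add_right, real_inner_smul_left, real_inner_smul_right,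
    inner_self_eq_one_of_norm_eq_one hu, inner_self_eq_one_of_norm_eq_one hv,
    real_inner_comm u v] at hnorm
  have : (a ^ 2 - 1) * ((⟪u, v⟫ - 1) * (⟪u, v⟫ + 1)) = 0 := by
    linear_combination -hnorm + (b + a * ⟪u, v⟫ + ⟪u, v⟫) * hb
  simpa [sub_eq_zero, add_eq_zero_iff_eq_neg, huv, huv'] using this

theorem map_sub_inner_smul_sub_eq_smul (P : V →ₗ[ℝ] V) (hu : ‖u‖ = 1) (hv : ‖v‖ = 1) {a b : ℝ}
    (hPu : P u = v) (hPv : P v = a • u + b • v) (hab : a * ⟪u, v⟫ + b = ⟪u, v⟫) (α β : ℝ) :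
    P (α • u + β • v - ⟪α • u + β • v, u⟫ • u) - (α • u + β • v - ⟪α • u + β • v, v⟫ • v) =
      (β * a - α) • (u - ⟪u, v⟫ • v) := by
  simp only [inner_add_left, real_inner_smul_left, inner_self_eq_one_of_norm_eq_one hu,
    inner_self_eq_one_of_norm_eq_one hv, real_inner_comm u v, map_sub, map_add, map_smul, hPu, hPv]
  obtain rfl : b = ⟪u, v⟫ - a * ⟪u, v⟫ := by linarith
  module

end UnitPair

theorem stmt_5_general (V : Type*) [NormedAddCommGroup V] [InnerProductSpace ℝ V]
    (u v : V) (hu : ‖u‖ = 1) (hv : ‖v‖ = 1)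
    (huv : ⟪u, v⟫ ≠ 1) (huv' : ⟪u, v⟫ ≠ -1)
    (P : V →ₗ[ℝ] V) (hP : ∀ x, ‖P x‖ = ‖x‖) (hPu : P u = v)
    (hW : ∀ x ∈ Submodule.span ℝ {u, v}, P x ∈ Submodule.span ℝ {u, v})
    (δ : ℝ) (hδ : δ = LinearMap.det (P.restrict hW)) :
    ∀ x ∈ Submodule.span ℝ {u, v},
      (P (x - ⟪x, u⟫ • u) - (x - ⟪x, v⟫ • v) = 0 ↔
        x ∈ Submodule.span ℝ {u - δ • v}) := by
  have hli := linearIndependent_pair_of_norm_eq_one hu hv huv huv'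
  have hPinner := (LinearMap.norm_map_iff_inner_map_map P).mp hP
  obtain ⟨a, b, hPv⟩ := Submodule.mem_span_pair.mp (hW v (Submodule.subset_span (by simp)))
  have hδa : δ = -a := by
    rw [hδ, P.det_restrict_span_pair hli hW (a := 0) (b := 1) (by simp [hPu]) hPv.symm]
    ring
  have ha := sq_eq_one_of_map_pair P hPinner hu hv huv huv' hPu hPv.symm
  have hne : u - ⟪u, v⟫ • v ≠ 0 := fun h => by
    simpa using LinearIndependent.pair_iff.mp hli 1 (-⟪u, v⟫) (by rw [← h]; module)
  intro x hx
  obtain ⟨α, β, rfl⟩ := Submodule.mem_span_pair.mp hx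
  rw [map_sub_inner_smul_sub_eq_smul P hu hv hPu hPv.symm
      (mul_inner_add_eq_inner_of_map_pair P hPinner hv hPu hPv.symm), smul_eq_zero_iff_left hne,
    hli.smul_add_smul_mem_span_sub_smul_iff, hδa]
  constructor <;> intro h
  · linear_combination a * h - β * ha
  · linear_combination a * h + α * ha

theorem stmt_5 (V : Type*) [NormedAddCommGroup V] [InnerProductSpace ℝ V]
    [FiniteDimensional ℝ V]
    (u v : V) (hu : ‖u‖ = 1) (hv : ‖v‖ = 1)
    (huv : ⟪u, v⟫ ≠ 1) (huv' : ⟪u, v⟫ ≠ -1)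
    (P : V →ₗ[ℝ] V) (hP : ∀ x, ‖P x‖ = ‖x‖) (hPu : P u = v)
    (hW : ∀ x ∈ Submodule.span ℝ {u, v}, P x ∈ Submodule.span ℝ {u, v})
    (δ : ℝ) (hδ : δ = LinearMap.det (P.restrict hW)) :
    ∀ x ∈ Submodule.span ℝ {u, v},
      (P (x - ⟪x, u⟫ • u) - (x - ⟪x, v⟫ • v) = 0 ↔
        x ∈ Submodule.span ℝ {u - δ • v}) :=
  stmt_5_general V u v hu hv huv huv' P hP hPu hW δ hδ
end

section
/- Let V be a finite-dimensional real inner product space, u, v unit vectors spanning a 2-dimensional subspace W with ⟨u,v⟩ ∉ {−1,1}, and P : V → V an orthogonal linear map with Pu = v such that W is P-invariant and P restricted to W^⊥ is the identity and det(P|_W) = 1. Let π₀, π₁ be the orthogonal projections onto u^⊥ and v^⊥ respectively, and D = Pπ₀ − π₁. Then ker(D) is the hyperplane of V orthogonal to u + v. -/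
/-! `P v` is a unit vector of `W = span {u, v}` with `⟪P v, v⟫ = ⟪P v, P u⟫ = ⟪u, v⟫`, so it is
either `u` or the reflection `2⟪u, v⟫ v - u` of `u` in `v`; the first would make `P|_W` the swap
of the basis `(u, v)`, of determinant `-1`. Knowing `P` on `u`, `v` and `Wᗮ`, one computes
`(1 + ⟪u, v⟫) • D x = ⟪x, u + v⟫ • (⟪u, v⟫ • v - u)`, and `⟪u, v⟫ • v - u ≠ 0` since
`|⟪u, v⟫| ≠ 1`. -/

open scoped RealInnerProductSpace

open Module Submodule

theorem linearIndependent_pair_of_norm_inner_ne {𝕜 E : Type*} [RCLike 𝕜] [NormedAddCommGroup E]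
    [InnerProductSpace 𝕜 E] {u v : E} (h : ‖(inner 𝕜 u v)‖ ≠ ‖u‖ * ‖v‖) :
    LinearIndependent 𝕜 ![u, v] := by
  have hdep := ((norm_inner_eq_norm_tfae (𝕜 := 𝕜) u v).out 0 2).not.mp h
  push Not at hdep
  rw [LinearIndependent.pair_iff' hdep.1]
  exact fun r hr => hdep.2 r hr.symm

theorem LinearMap.det_restrict_eq_neg_one_of_swap {R M : Type*} [CommRing R] [AddCommGroup M]
    [Module R M] {f : M →ₗ[R] M} {u v : M} (hli : LinearIndependent R ![u, v])
    (hf : ∀ x ∈ span R {u, v}, f x ∈ span R {u, v}) (hu : f u = v) (hv : f v = u) :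
    LinearMap.det (f.restrict hf) = -1 := by
  have hrange : span R (Set.range ![u, v]) = span R {u, v} := by
    rw [Matrix.range_cons, Matrix.range_cons, Matrix.range_empty, Set.union_empty,
      Set.singleton_union]
  let b : Basis (Fin 2) R (span R {u, v}) := (Basis.span hli).map (LinearEquiv.ofEq _ _ hrange)
  have hb0 : (b 0 : M) = u := by simp [b, Basis.span_apply]
  have hb1 : (b 1 : M) = v := by simp [b, Basis.span_apply]
  have hf0 : f.restrict hf (b 0) = b 1 := Subtype.ext (by simp [hb0, hb1, hu])
  have hf1 : f.restrict hf (b 1) = b 0 := Subtype.ext (by simp [hb0, hb1, hv])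
  have hM : toMatrix b b (f.restrict hf) = !![0, 1; 1, 0] := by
    ext i j
    fin_cases i <;> fin_cases j <;> simp [toMatrix_apply, hf0, hf1]
  rw [← LinearMap.det_toMatrix b, hM, Matrix.det_fin_two_of]
  ring

section Reflection

variable {V : Type*} [NormedAddCommGroup V] [InnerProductSpace ℝ V]

theorem eq_or_eq_reflection_of_mem_span_pair {u v w : V} (hv : ‖v‖ = 1)
    (huv : ⟪u, v⟫ ^ 2 ≠ ‖u‖ ^ 2) (hw : w ∈ span ℝ {u, v}) (hwv : ⟪w, v⟫ = ⟪u, v⟫)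
    (hwu : ‖w‖ = ‖u‖) : w = u ∨ w = (2 * ⟪u, v⟫) • v - u := by
  obtain ⟨s, t, rfl⟩ := mem_span_pair.mp hw
  have hvv : ⟪v, v⟫ = 1 := by rw [real_inner_self_eq_norm_sq, hv, one_pow]
  have hlin : s * ⟪u, v⟫ + t = ⟪u, v⟫ := by
    simpa [inner_add_left, inner_smul_left, hv] using hwv
  have hquad : s ^ 2 * ‖u‖ ^ 2 + 2 * s * t * ⟪u, v⟫ + t ^ 2 = ‖u‖ ^ 2 := by
    have h := congrArg (· ^ 2) hwu
    simp only [← real_inner_self_eq_norm_sq, inner_add_left, inner_add_right, inner_smul_left,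
      inner_smul_right, real_inner_comm u v, hvv, RCLike.conj_to_real] at h ⊢
    linear_combination h
  have hs : (s - 1) * (s + 1) * (‖u‖ ^ 2 - ⟪u, v⟫ ^ 2) = 0 := by
    linear_combination hquad - (s * ⟪u, v⟫ + t + ⟪u, v⟫) * hlin
  rcases mul_eq_zero.mp hs with hs | hs
  · rcases mul_eq_zero.mp hs with hs | hs
    · left
      obtain rfl : s = 1 := by linarith
      obtain rfl : t = 0 := by linarith
      simp
    · right
      obtain rfl : s = -1 := by linarith
      obtain rfl : t = 2 * ⟪u, v⟫ := by linarith
      module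
  · exact absurd (by linarith) huv

end Reflection

section Rotation

variable {V : Type*} [NormedAddCommGroup V] [InnerProductSpace ℝ V] {u v : V} {P : V →ₗ[ℝ] V}

theorem map_eq_reflection_of_det_restrict_eq_one (hu : ‖u‖ = 1) (hv : ‖v‖ = 1)
    (huv : |⟪u, v⟫| ≠ 1) (hP : ∀ x, ‖P x‖ = ‖x‖) (hPu : P u = v)
    (hW : ∀ x ∈ span ℝ {u, v}, P x ∈ span ℝ {u, v}) (hdet : LinearMap.det (P.restrict hW) = 1) :
    P v = (2 * ⟪u, v⟫) • v - u := by
  have hPv_v : ⟪P v, v⟫ = ⟪u, v⟫ := by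
    rw [← hPu, (LinearMap.norm_map_iff_inner_map_map P).mp hP, real_inner_comm]
  have huv_sq : ⟪u, v⟫ ^ 2 ≠ ‖u‖ ^ 2 := by
    rwa [hu, ne_eq, sq_eq_sq_iff_abs_eq_abs, abs_one]
  rcases eq_or_eq_reflection_of_mem_span_pair hv huv_sq (hW v (subset_span (by simp))) hPv_v
    ((hP v).trans (hv.trans hu.symm)) with hPv | hPv
  · have hli : LinearIndependent ℝ ![u, v] :=
      linearIndependent_pair_of_norm_inner_ne (by rwa [hu, hv, mul_one, Real.norm_eq_abs])
    have := LinearMap.det_restrict_eq_neg_one_of_swap hli hW hPu hPv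
    norm_num [hdet] at this
  · exact hPv

theorem one_add_inner_smul_defect_eq (hu : ‖u‖ = 1) (hv : ‖v‖ = 1) (hPu : P u = v)
    (hPv : P v = (2 * ⟪u, v⟫) • v - u) (hWperp : ∀ x ∈ (span ℝ {u, v})ᗮ, P x = x) (x : V) :
    (1 + ⟪u, v⟫) • (P (x - ⟪x, u⟫ • u) - (x - ⟪x, v⟫ • v)) = ⟪x, u + v⟫ • (⟪u, v⟫ • v - u) := by
  have : FiniteDimensional ℝ (span ℝ {u, v}) := .span_of_finite ℝ (Set.toFinite _)
  obtain ⟨y, hy, z, hz, rfl⟩ := (span ℝ {u, v}).exists_add_mem_mem_orthogonal x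
  obtain ⟨a, b, rfl⟩ := mem_span_pair.mp hy
  have hzu : ⟪z, u⟫ = 0 := inner_left_of_mem_orthogonal (subset_span (by simp)) hz
  have hzv : ⟪z, v⟫ = 0 := inner_left_of_mem_orthogonal (subset_span (by simp)) hz
  have huu : ⟪u, u⟫ = 1 := by rw [real_inner_self_eq_norm_sq, hu, one_pow]
  have hvv : ⟪v, v⟫ = 1 := by rw [real_inner_self_eq_norm_sq, hv, one_pow]
  simp only [inner_add_left, inner_add_right, inner_smul_left, huu, hvv, hzu, hzv,
    real_inner_comm u v, RCLike.conj_to_real, map_sub, map_add, map_smul, hPu, hPv,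
    hWperp z hz]
  module

end Rotation

theorem stmt_7_general (V : Type*) [NormedAddCommGroup V] [InnerProductSpace ℝ V]
    (u v : V) (hu : ‖u‖ = 1) (hv : ‖v‖ = 1)
    (huv : ⟪u, v⟫ ≠ 1) (huv' : ⟪u, v⟫ ≠ -1)
    (P : V →ₗ[ℝ] V) (hP : ∀ x, ‖P x‖ = ‖x‖) (hPu : P u = v)
    (hW : ∀ x ∈ Submodule.span ℝ {u, v}, P x ∈ Submodule.span ℝ {u, v})
    (hWperp : ∀ x ∈ (Submodule.span ℝ {u, v})ᗮ, P x = x)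
    (hdet : LinearMap.det (P.restrict hW) = 1) :
    ∀ x : V, (P (x - ⟪x, u⟫ • u) - (x - ⟪x, v⟫ • v) = 0 ↔ ⟪x, u + v⟫ = 0) := by
  intro x
  have habs : |⟪u, v⟫| ≠ 1 := by
    rw [ne_eq, abs_eq zero_le_one, not_or]
    exact ⟨huv, huv'⟩
  have hPv := map_eq_reflection_of_det_restrict_eq_one hu hv habs hP hPu hW hdet
  have hc : 1 + ⟪u, v⟫ ≠ 0 := fun h => huv' (by linarith)
  have hw : ⟪u, v⟫ • v - u ≠ 0 := by
    rw [ne_eq, sub_eq_zero]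
    intro h
    have := congrArg norm h
    rw [norm_smul, hv, hu, mul_one, Real.norm_eq_abs] at this
    exact habs this
  rw [← smul_eq_zero_iff_right hc, one_add_inner_smul_defect_eq hu hv hPu hPv hWperp x,
    smul_eq_zero, or_iff_left hw]

theorem stmt_7 (V : Type*) [NormedAddCommGroup V] [InnerProductSpace ℝ V]
    [FiniteDimensional ℝ V]
    (u v : V) (hu : ‖u‖ = 1) (hv : ‖v‖ = 1)
    (huv : ⟪u, v⟫ ≠ 1) (huv' : ⟪u, v⟫ ≠ -1)
    (P : V →ₗ[ℝ] V) (hP : ∀ x, ‖P x‖ = ‖x‖) (hPu : P u = v)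
    (hW : ∀ x ∈ Submodule.span ℝ {u, v}, P x ∈ Submodule.span ℝ {u, v})
    (hWperp : ∀ x ∈ (Submodule.span ℝ {u, v})ᗮ, P x = x)
    (hdet : LinearMap.det (P.restrict hW) = 1) :
    ∀ x : V, (P (x - ⟪x, u⟫ • u) - (x - ⟪x, v⟫ • v) = 0 ↔ ⟪x, u + v⟫ = 0) :=
  stmt_7_general V u v hu hv huv huv' P hP hPu hW hWperp hdet
end

section
/- Let f : ℝⁿ → ℝ be a convex function that is κ-strongly convex when restricted to a ball B_{1+r}(z) ⊆ ℝⁿ (for some κ > 0, r > 0, z ∈ ℝⁿ), and let Θ : ℝⁿ → ℝ be a nonnegative integrable even function (Θ(−y) = Θ(y)) with ∫Θ = 1 and Θ(y) ≥ c > 0 for all y ∈ B₁(z). Assume the convolution f * Θ is everywhere defined and finite. Then f * Θ is κ̂-strongly convex on B_r(0) with κ̂ = κ · c · ωₙ, where ωₙ is the volume of the unit ball in ℝⁿ. -/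
/-!
For each `y` the weighted translate `x ↦ f (x + y) * Θ (-y)` is convex, and for `y ∈ B₁(z)` it is
even `κ c`-strongly convex on `B_r(0)`, because `B_r(0) + B₁(z) ⊆ B_{1+r}(z)` and
`Θ (-y) = Θ y ≥ c` there. Strong convexity moduli add up under integration, so `f * Θ` has modulus
`∫ κ c 𝟙_{B₁(z)} = κ c vol(B₁(z)) = κ c ωₙ`.
-/

open MeasureTheory

/-- κ-strong convexity of `f` on a set `U`. -/
def KStrongConvexOn {E : Type*} [NormedAddCommGroup E] [NormedSpace ℝ E]
    (U : Set E) (κ : ℝ) (f : E → ℝ) : Prop :=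
  ∀ x₀ ∈ U, ∀ x₁ ∈ U, ∀ l : ℝ, l ∈ Set.Icc (0:ℝ) 1 →
    f (l • x₀ + (1 - l) • x₁) + l * (1 - l) / 2 * κ * ‖x₀ - x₁‖ ^ 2 ≤
      l * f x₀ + (1 - l) * f x₁

open Metric Set

section KStrongConvexOn

variable {E : Type*} [NormedAddCommGroup E] [NormedSpace ℝ E] {U V : Set E} {κ κ' : ℝ}
  {f : E → ℝ}

theorem ConvexOn.kStrongConvexOn_zero (hf : ConvexOn ℝ U f) : KStrongConvexOn U 0 f := by
  intro x₀ hx₀ x₁ hx₁ l ⟨hl0, hl1⟩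
  simpa using hf.2 hx₀ hx₁ hl0 (sub_nonneg.2 hl1) (add_sub_cancel l 1)

theorem KStrongConvexOn.subset (hf : KStrongConvexOn V κ f) (hUV : U ⊆ V) :
    KStrongConvexOn U κ f :=
  fun x₀ hx₀ x₁ hx₁ => hf x₀ (hUV hx₀) x₁ (hUV hx₁)

theorem KStrongConvexOn.mono (hf : KStrongConvexOn U κ f) (hκ : κ' ≤ κ) :
    KStrongConvexOn U κ' f := by
  intro x₀ hx₀ x₁ hx₁ l hl
  have hl' : 0 ≤ l * (1 - l) / 2 := by nlinarith [hl.1, hl.2]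
  have : l * (1 - l) / 2 * κ' * ‖x₀ - x₁‖ ^ 2 ≤ l * (1 - l) / 2 * κ * ‖x₀ - x₁‖ ^ 2 := by
    gcongr
  linarith [hf x₀ hx₀ x₁ hx₁ l hl]

theorem KStrongConvexOn.mul_const (hf : KStrongConvexOn U κ f) {w : ℝ} (hw : 0 ≤ w) :
    KStrongConvexOn U (κ * w) (fun x => f x * w) := by
  intro x₀ hx₀ x₁ hx₁ l hl
  have := mul_le_mul_of_nonneg_right (hf x₀ hx₀ x₁ hx₁ l hl) hw
  linarith

theorem KStrongConvexOn.comp_add_right {S : Set E} (hf : KStrongConvexOn S κ f) {y : E}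
    (hU : ∀ x ∈ U, x + y ∈ S) : KStrongConvexOn U κ (fun x => f (x + y)) := by
  intro x₀ hx₀ x₁ hx₁ l hl
  have hcombo : l • (x₀ + y) + (1 - l) • (x₁ + y) = l • x₀ + (1 - l) • x₁ + y := by
    rw [smul_add, smul_add, add_add_add_comm, ← add_smul, add_sub_cancel, one_smul]
  simpa only [hcombo, add_sub_add_right_eq_sub] using hf _ (hU x₀ hx₀) _ (hU x₁ hx₁) l hl

theorem KStrongConvexOn.integral {Y : Type*} [MeasurableSpace Y] {μ : Measure Y}
    {g : Y → E → ℝ} {k : Y → ℝ} (hg : ∀ y, KStrongConvexOn U (k y) (g y))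
    (hk : Integrable k μ) (hgint : ∀ x, Integrable (fun y => g y x) μ) :
    KStrongConvexOn U (∫ y, k y ∂μ) (fun x => ∫ y, g y x ∂μ) := by
  intro x₀ hx₀ x₁ hx₁ l hl
  set D := l * (1 - l) / 2 * ‖x₀ - x₁‖ ^ 2
  have hmono : ∫ y, (g y (l • x₀ + (1 - l) • x₁) + k y * D) ∂μ
      ≤ ∫ y, (l * g y x₀ + (1 - l) * g y x₁) ∂μ := by
    refine integral_mono ((hgint _).add (hk.mul_const D))
      (((hgint x₀).const_mul l).add ((hgint x₁).const_mul (1 - l))) fun y => ?_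
    have := hg y x₀ hx₀ x₁ hx₁ l hl
    simp only [D]
    linarith
  rw [integral_add (hgint _) (hk.mul_const D), integral_add ((hgint x₀).const_mul l)
    ((hgint x₁).const_mul (1 - l)), integral_mul_const, integral_const_mul,
    integral_const_mul] at hmono
  simp only [D] at hmono
  linarith

end KStrongConvexOn

theorem add_mem_ball_of_mem_ball_zero {E : Type*} [SeminormedAddCommGroup E] {x y z : E}
    {r s : ℝ} (hx : x ∈ ball 0 r) (hy : y ∈ ball z s) : x + y ∈ ball z (s + r) := by
  rw [mem_ball] at *
  calc dist (x + y) z = dist (x + y) (0 + z) := by rw [zero_add]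
    _ ≤ dist x 0 + dist y z := dist_add_add_le _ _ _ _
    _ < s + r := by linarith

theorem stmt_13_general (n : ℕ) (f Θ : EuclideanSpace ℝ (Fin n) → ℝ)
    (hf : ConvexOn ℝ Set.univ f)
    (κ r c : ℝ) (hκ : 0 < κ)
    (z : EuclideanSpace ℝ (Fin n))
    (hfs : KStrongConvexOn (Metric.ball z (1 + r)) κ f)
    (hΘ0 : ∀ y, 0 ≤ Θ y)
    (hΘeven : ∀ y, Θ (-y) = Θ y)
    (hΘc : ∀ y ∈ Metric.ball z 1, c ≤ Θ y)
    (F : EuclideanSpace ℝ (Fin n) → ℝ)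
    (hF : ∀ x, F x = ∫ y, f (x + y) * Θ (-y))
    (hFint : ∀ x, Integrable (fun y => f (x + y) * Θ (-y))) :
    KStrongConvexOn (Metric.ball (0 : EuclideanSpace ℝ (Fin n)) r)
      (κ * c * (volume (Metric.ball (0 : EuclideanSpace ℝ (Fin n)) 1)).toReal) F := by
  have hslice : ∀ y, KStrongConvexOn (ball 0 r) ((ball z 1).indicator (fun _ => κ * c) y)
      (fun x => f (x + y) * Θ (-y)) := by
    intro y
    by_cases hy : y ∈ ball z 1
    · rw [indicator_of_mem hy]
      refine ((hfs.comp_add_right fun x hx => add_mem_ball_of_mem_ball_zero hx hy).mul_const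
        (hΘ0 _)).mono ?_
      exact mul_le_mul_of_nonneg_left (hΘeven y ▸ hΘc y hy) hκ.le
    · rw [indicator_of_notMem hy]
      simpa using ((hf.kStrongConvexOn_zero.comp_add_right fun x _ => mem_univ (x + y)).mul_const
        (hΘ0 (-y))).subset (subset_univ _)
  have hind : Integrable ((ball z 1).indicator fun _ => κ * c) :=
    (integrableOn_const measure_ball_lt_top.ne).integrable_indicator measurableSet_ball
  have hconv := KStrongConvexOn.integral hslice hind hFint
  rw [integral_indicator_const _ measurableSet_ball, measureReal_def,
    Measure.addHaar_ball_center, smul_eq_mul, mul_comm] at hconv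
  rwa [show F = _ from funext hF]

theorem stmt_13 (n : ℕ) (f Θ : EuclideanSpace ℝ (Fin n) → ℝ)
    (hf : ConvexOn ℝ Set.univ f)
    (κ r c : ℝ) (hκ : 0 < κ) (hr : 0 < r) (hc : 0 < c)
    (z : EuclideanSpace ℝ (Fin n))
    (hfs : KStrongConvexOn (Metric.ball z (1 + r)) κ f)
    (hΘ0 : ∀ y, 0 ≤ Θ y) (hΘint : Integrable Θ)
    (hΘeven : ∀ y, Θ (-y) = Θ y) (hΘ1 : ∫ y, Θ y = 1)
    (hΘc : ∀ y ∈ Metric.ball z 1, c ≤ Θ y)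
    (F : EuclideanSpace ℝ (Fin n) → ℝ)
    (hF : ∀ x, F x = ∫ y, f (x + y) * Θ (-y))
    (hFint : ∀ x, Integrable (fun y => f (x + y) * Θ (-y))) :
    KStrongConvexOn (Metric.ball (0 : EuclideanSpace ℝ (Fin n)) r)
      (κ * c * (volume (Metric.ball (0 : EuclideanSpace ℝ (Fin n)) 1)).toReal) F :=
  stmt_13_general n f Θ hf κ r c hκ z hfs hΘ0 hΘeven hΘc F hF hFint
end
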